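/- For p-commuting elements x, y (x*y = p*y*x) in a complete filtered algebra with x, y topologically nilpotent and p central, phi_m(x + y) * (x + y)^m = sum over j, n >= 0 with j + n >= m of [j+n-1 choose m-1]_p [j+n choose j]_p y^n x^j. -/

import Mathlib

/-- The Gaussian (quantum) binomial coefficient `[n choose k]_p`. -/
def qBinom {R : Type*} [Ring R] (p : R) : ℕ → ℕ → R
  | _, 0 => 1
  | 0, _ + 1 => 0
  | n + 1, k + 1 => qBinom p n k + p ^ (k + 1) * qBinom p n (k + 1)

section Aux

variable {A : Type*} [Ring A] (p x y : A)

lemma qBinom_zero_right (n : ℕ) : qBinom p n 0 = 1 := by cases n <;> rfl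

lemma qBinom_succ_succ (n k : ℕ) :
    qBinom p (n + 1) (k + 1) = qBinom p n k + p ^ (k + 1) * qBinom p n (k + 1) := rfl

lemma qBinom_eq_zero : ∀ {n k : ℕ}, n < k → qBinom p n k = 0 := by
  intro n
  induction n with
  | zero => intro k hk; match k, hk with | k + 1, _ => rfl
  | succ n ih =>
    intro k hk
    match k, hk with
    | k + 1, hk =>
      rw [qBinom_succ_succ, ih (by omega), ih (by omega), mul_zero, add_zero]

lemma qBinom_self : ∀ n : ℕ, qBinom p n n = 1 := by
  intro n
  induction n with
  | zero => rfl
  | succ n ih =>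
    rw [qBinom_succ_succ, ih, qBinom_eq_zero p (by omega), mul_zero, add_zero]

variable (hpc : ∀ a : A, p * a = a * p)

include hpc in
lemma pow_comm' (i : ℕ) (a : A) : p ^ i * a = a * p ^ i := by
  induction i with
  | zero => simp
  | succ i ih => rw [pow_succ, mul_assoc, hpc, ← mul_assoc, ih, mul_assoc]

include hpc in
lemma qBinom_comm : ∀ (n k : ℕ) (a : A), qBinom p n k * a = a * qBinom p n k := by
  intro n
  induction n with
  | zero =>
    intro k a
    cases k with
    | zero => show 1 * a = a * 1; rw [one_mul, mul_one]
    | succ k => show 0 * a = a * 0; rw [zero_mul, mul_zero]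
  | succ n ih =>
    intro k a
    cases k with
    | zero => show 1 * a = a * 1; rw [one_mul, mul_one]
    | succ k =>
      rw [qBinom_succ_succ, add_mul, mul_add, ih, mul_assoc, ih, ← mul_assoc,
        pow_comm' p hpc, mul_assoc]

variable (hxy : x * y = p * (y * x))

include hpc hxy in
lemma x_pow_mul_y (j : ℕ) : x ^ j * y = p ^ j * (y * x ^ j) := by
  induction j with
  | zero => simp
  | succ j ih =>
    calc x ^ (j + 1) * y = x * (x ^ j * y) := by rw [pow_succ', mul_assoc]
      _ = x * (p ^ j * (y * x ^ j)) := by rw [ih]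
      _ = p ^ j * (x * (y * x ^ j)) := by rw [← mul_assoc, ← pow_comm' p hpc, mul_assoc]
      _ = p ^ j * ((x * y) * x ^ j) := by rw [← mul_assoc x]
      _ = p ^ j * (p * (y * x) * x ^ j) := by rw [hxy]
      _ = p ^ (j + 1) * (y * x ^ (j + 1)) := by
          rw [mul_assoc p, mul_assoc y, ← pow_succ', ← mul_assoc, ← pow_succ]

include hpc hxy in
lemma q_binom_theorem (N : ℕ) :
    (x + y) ^ N = ∑ j ∈ Finset.range (N + 1), qBinom p N j * (y ^ (N - j) * x ^ j) := by
  induction N with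
  | zero => simp [qBinom]
  | succ N ih =>
    rw [pow_succ, ih, Finset.sum_mul]
    have expand : ∀ j ∈ Finset.range (N + 1),
        qBinom p N j * (y ^ (N - j) * x ^ j) * (x + y)
          = qBinom p N j * (y ^ (N - j) * x ^ (j + 1))
            + p ^ j * qBinom p N j * (y ^ (N - j + 1) * x ^ j) := by
      intro j _
      rw [mul_add]
      congr 1
      · rw [mul_assoc, mul_assoc (y ^ (N - j)), ← pow_succ]
      · calc qBinom p N j * (y ^ (N - j) * x ^ j) * y
            = qBinom p N j * (y ^ (N - j) * (x ^ j * y)) := by rw [mul_assoc, mul_assoc]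
          _ = qBinom p N j * (y ^ (N - j) * (p ^ j * (y * x ^ j))) := by
              rw [x_pow_mul_y p x y hpc hxy]
          _ = qBinom p N j * (p ^ j * (y ^ (N - j) * (y * x ^ j))) := by
              rw [← mul_assoc (y ^ (N - j)), ← pow_comm' p hpc, mul_assoc]
          _ = p ^ j * qBinom p N j * (y ^ (N - j + 1) * x ^ j) := by
              rw [← mul_assoc, qBinom_comm p hpc, ← mul_assoc (y ^ (N - j)), ← pow_succ]
    rw [Finset.sum_congr rfl expand, Finset.sum_add_distrib]
    have hsplit : ∑ j ∈ Finset.range (N + 2), qBinom p (N + 1) j * (y ^ (N + 1 - j) * x ^ j)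
        = (∑ j ∈ Finset.range (N + 1),
            qBinom p (N + 1) (j + 1) * (y ^ (N - j) * x ^ (j + 1)))
          + y ^ (N + 1) := by
      rw [Finset.sum_range_succ']
      simp only [qBinom_zero_right, one_mul, pow_zero, mul_one, Nat.sub_zero,
        Nat.succ_sub_succ_eq_sub]
    rw [hsplit]
    have hmid : ∑ j ∈ Finset.range (N + 1),
        qBinom p (N + 1) (j + 1) * (y ^ (N - j) * x ^ (j + 1))
        = (∑ j ∈ Finset.range (N + 1), qBinom p N j * (y ^ (N - j) * x ^ (j + 1)))
          + ∑ j ∈ Finset.range (N + 1),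
              p ^ (j + 1) * qBinom p N (j + 1) * (y ^ (N - j) * x ^ (j + 1)) := by
      rw [← Finset.sum_add_distrib]
      exact Finset.sum_congr rfl fun j _ => by rw [qBinom_succ_succ, add_mul]
    rw [hmid]
    have hsecond : ∑ j ∈ Finset.range (N + 1), p ^ j * qBinom p N j * (y ^ (N - j + 1) * x ^ j)
        = (∑ j ∈ Finset.range (N + 1),
            p ^ (j + 1) * qBinom p N (j + 1) * (y ^ (N - j) * x ^ (j + 1))) + y ^ (N + 1) := by
      rw [Finset.sum_range_succ']
      simp only [pow_zero, one_mul, qBinom_zero_right, Nat.sub_zero, mul_one]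
      rw [Finset.sum_range_succ, qBinom_eq_zero p (by omega : N < N + 1), mul_zero, zero_mul,
        add_zero]
      congr 1
      refine Finset.sum_congr rfl fun j hj => ?_
      simp only [Finset.mem_range] at hj
      congr 3
      omega
    rw [hsecond]
    abel

end Aux

namespace PhiAux

open PowerSeries

variable {A : Type*} [Ring A] (p x y : A)

lemma isUnit_one_sub_X_mul_C (w : A) : IsUnit ((1 : PowerSeries A) - X * C w) := by
  refine ⟨⟨(1 : PowerSeries A) - X * C w, PowerSeries.mk fun N => w ^ N, ?_, ?_⟩, rfl⟩
  · ext N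
    cases N with
    | zero =>
      simp [coeff_zero_eq_constantCoeff, map_sub, map_mul, constantCoeff_X]
    | succ N =>
      rw [sub_mul, one_mul, map_sub, mul_assoc, coeff_succ_X_mul, coeff_C_mul,
        coeff_mk, coeff_mk, ← pow_succ', coeff_one]
      simp
  · ext N
    cases N with
    | zero =>
      simp [coeff_zero_eq_constantCoeff, map_sub, map_mul, constantCoeff_X]
    | succ N =>
      rw [mul_sub, mul_one, map_sub, ← mul_assoc, coeff_mul_C,
        (commute_X (PowerSeries.mk fun N => w ^ N)).eq, coeff_succ_X_mul,
        coeff_mk, coeff_mk, ← pow_succ, coeff_one]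
      simp

/-- The series `T m = ∑_{N ≥ m} [N-1 choose m-1]_p (x+y)^N t^N`. -/
noncomputable def T (m : ℕ) : PowerSeries A :=
  PowerSeries.mk fun N => if m ≤ N then qBinom p (N - 1) (m - 1) * (x + y) ^ N else 0

lemma coeff_T (m N : ℕ) :
    (coeff N) (T p x y m)
      = if m ≤ N then qBinom p (N - 1) (m - 1) * (x + y) ^ N else 0 :=
  coeff_mk _ _

lemma step_base : ((1 : PowerSeries A) - X * C (x + y)) * T p x y 1 = X * C (x + y) := by
  ext N
  rw [sub_mul, one_mul, map_sub, mul_assoc]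
  cases N with
  | zero =>
    rw [coeff_zero_X_mul, coeff_zero_X_mul, coeff_T, if_neg (by omega), sub_zero]
  | succ N =>
    rw [coeff_succ_X_mul, coeff_C_mul, coeff_T, coeff_T, coeff_succ_X_mul, coeff_C]
    cases N with
    | zero =>
      simp [qBinom_zero_right]
    | succ N =>
      rw [if_pos (by omega), if_pos (by omega), if_neg (by omega)]
      simp only [Nat.succ_sub_one, Nat.zero_sub, qBinom_zero_right, one_mul, mul_zero]
      rw [← pow_succ']
      simp

variable (hpc : ∀ a : A, p * a = a * p)

include hpc in
lemma step_rec (m : ℕ) (hm : 1 ≤ m) :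
    ((1 : PowerSeries A) - C (p ^ m) * (X * C (x + y))) * T p x y (m + 1)
      = T p x y m * (X * C (x + y)) := by
  have hC : C (p ^ m) * (X * C (x + y)) = X * C (p ^ m * (x + y)) := by
    rw [← mul_assoc, (commute_X (C (p ^ m))).eq, mul_assoc, ← map_mul]
  rw [hC, ← mul_assoc (T p x y m), (commute_X (T p x y m)).eq, mul_assoc]
  ext N
  rw [sub_mul, one_mul, map_sub, mul_assoc]
  cases N with
  | zero =>
    rw [coeff_zero_X_mul, coeff_zero_X_mul, coeff_T, if_neg (by omega), sub_zero]
  | succ N =>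
    rw [coeff_succ_X_mul, coeff_succ_X_mul, coeff_C_mul, coeff_mul_C, coeff_T, coeff_T, coeff_T]
    by_cases h1 : m ≤ N
    · rw [if_pos (by omega : m + 1 ≤ N + 1), if_pos h1, Nat.succ_sub_one]
      by_cases h2 : m + 1 ≤ N
      · rw [if_pos h2]
        -- indices: N = (N-1)+1, m = (m-1)+1
        obtain ⟨n, rfl⟩ : ∃ n, N = n + 1 := ⟨N - 1, by omega⟩
        obtain ⟨k, rfl⟩ : ∃ k, m = k + 1 := ⟨m - 1, by omega⟩
        simp only [Nat.succ_sub_one]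
        rw [qBinom_succ_succ, add_mul]
        have hmove : p ^ (k + 1) * (x + y) * (qBinom p n (k + 1) * (x + y) ^ (n + 1))
            = p ^ (k + 1) * qBinom p n (k + 1) * (x + y) ^ (n + 1 + 1) := by
          rw [mul_assoc (p ^ (k + 1)), ← mul_assoc (x + y),
            ← qBinom_comm p hpc n (k + 1) (x + y), mul_assoc (qBinom p n (k + 1)),
            ← pow_succ', ← mul_assoc]
        rw [hmove, add_sub_cancel_right, mul_assoc, ← pow_succ]
      · -- N + 1 = m + 1
        have hN : N = m := by omega
        subst hN
        rw [if_neg (by omega), Nat.succ_sub_one, qBinom_self, qBinom_self, mul_zero, sub_zero,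
          one_mul, one_mul, ← pow_succ]
    · rw [if_neg (by omega), if_neg (by omega), if_neg h1, mul_zero, sub_zero, zero_mul]

include hpc in
lemma key (m : ℕ) (hm : 1 ≤ m) :
    (((List.range m).map fun i =>
        (1 : PowerSeries A) - C (p ^ i) * (X * C (x + y))).prod) * T p x y m
      = (X * C (x + y)) ^ m := by
  induction m, hm using Nat.le_induction with
  | base =>
    rw [List.range_succ, List.range_zero, List.nil_append]
    simp only [List.map_cons, List.map_nil, List.prod_cons, List.prod_nil,
      mul_one, pow_zero, map_one, one_mul, pow_one]
    exact step_base p x y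
  | succ m hm ih =>
    rw [List.range_succ, List.map_append, List.prod_append, List.map_singleton,
      List.prod_singleton, mul_assoc, step_rec p x y hpc m hm, ← mul_assoc, ih, ← pow_succ]

end PhiAux

open PowerSeries in
/-- For `x y = p y x` with `p` central, with topological nilpotency realized
`t`-adically (`x ↦ t x`, `y ↦ t y` in `A[[t]]`):
`φ_m(x+y) (x+y)^m = ∑_{j+n ≥ m} [j+n-1 choose m-1]_p [j+n choose j]_p y^n x^j`,
where `φ_m(z) = ∏_{i=0}^{m-1} (1 - p^i z)^{-1}`. -/
theorem phi_m_pow_expansion {A : Type*} [Ring A] (p x y : A)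
    (hpc : ∀ a : A, p * a = a * p) (hxy : x * y = p * (y * x))
    (m : ℕ) (hm : 1 ≤ m) :
    Ring.inverse (((List.range m).map fun i =>
        (1 : PowerSeries A) - C (p ^ i) * (X * C (x + y))).prod) *
      (X * C (x + y)) ^ m =
      PowerSeries.mk (fun N =>
        if m ≤ N then
          ∑ jn ∈ Finset.HasAntidiagonal.antidiagonal N,
            qBinom p (N - 1) (m - 1) * qBinom p N jn.1 * (y ^ jn.2 * x ^ jn.1)
        else 0) := by
  have hU : IsUnit (((List.range m).map fun i =>
      (1 : PowerSeries A) - C (p ^ i) * (X * C (x + y))).prod) := by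
    refine List.prod_isUnit ?_
    intro f hf
    simp only [List.mem_map, List.mem_range] at hf
    obtain ⟨i, _, rfl⟩ := hf
    have hC : C (p ^ i) * (X * C (x + y)) = X * C (p ^ i * (x + y)) := by
      rw [← mul_assoc, (commute_X (C (p ^ i))).eq, mul_assoc, ← map_mul]
    rw [hC]
    exact PhiAux.isUnit_one_sub_X_mul_C _
  have hT : PowerSeries.mk (fun N =>
        if m ≤ N then
          ∑ jn ∈ Finset.HasAntidiagonal.antidiagonal N,
            qBinom p (N - 1) (m - 1) * qBinom p N jn.1 * (y ^ jn.2 * x ^ jn.1)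
        else 0) = PhiAux.T p x y m := by
    ext N
    rw [PhiAux.coeff_T, coeff_mk]
    by_cases h : m ≤ N
    · rw [if_pos h, if_pos h, q_binom_theorem p x y hpc hxy N,
        Finset.mul_sum, Finset.Nat.sum_antidiagonal_eq_sum_range_succ_mk]
      exact Finset.sum_congr rfl fun j _ => by rw [mul_assoc]
    · rw [if_neg h, if_neg h]
  rw [hT, ← PhiAux.key p x y hpc m hm, Ring.inverse_mul_cancel_left _ _ hU]
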